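/- For 0 < Λ ≤ Λ₀ define the regularised covariance C^{Λ,Λ₀}(p) := (exp(−‖p‖²/Λ₀²) − exp(−‖p‖²/Λ²))/‖p‖² for p ∈ ℝ⁴, p ≠ 0. Its Λ-derivative extends to the smooth function ∂_Λ C^{Λ,Λ₀}(p) = −(2/Λ³)·exp(−‖p‖²/Λ²) on all of ℝ⁴, and for every multi-index w ∈ ℕ⁴ there exists a constant c > 0 such that for all 0 < Λ ≤ Λ₀ and all p ∈ ℝ⁴, |∂_p^w ∂_Λ C^{Λ,Λ₀}(p)| ≤ c · max(‖p‖, Λ)^{−3−|w|} · exp(−‖p‖²/(2Λ²)), where ∂_p^w denotes the iterated partial derivative in p of multi-index w and |w| = w₁+w₂+w₃+w₄. -/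

import Mathlib

open scoped ContDiff

lemma aux_pow_le_exp (m : ℕ) {a : ℝ} (ha : 0 < a) :
    ∃ C > 0, ∀ r : ℝ, 0 ≤ r → r ^ m ≤ C * Real.exp (a * r ^ 2) := by
  refine ⟨1 + m.factorial / a ^ m, by positivity, fun r hr => ?_⟩
  have h1 : (1:ℝ) ≤ Real.exp (a * r ^ 2) := Real.one_le_exp (by positivity)
  have key : r ^ m ≤ 1 + r ^ (2 * m) := by
    rcases le_total r 1 with h | h
    · have h2 := pow_le_one₀ hr h (n := m)
      nlinarith [pow_nonneg hr (2 * m)]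
    · have h2 : r ^ m ≤ r ^ (2 * m) := pow_le_pow_right₀ h (by omega)
      nlinarith
  have hE : (a * r ^ 2) ^ m / m.factorial ≤ Real.exp (a * r ^ 2) :=
    Real.pow_div_factorial_le_exp (x := a * r ^ 2) (by positivity) m
  have hfac : (0:ℝ) < (m.factorial : ℝ) := by exact_mod_cast m.factorial_pos
  have ham : (0:ℝ) < a ^ m := pow_pos ha m
  have h2 : r ^ (2 * m) ≤ (m.factorial : ℝ) / a ^ m * Real.exp (a * r ^ 2) := by
    rw [div_mul_eq_mul_div, le_div_iff₀ ham]
    have expand : r ^ (2 * m) * a ^ m = (a * r ^ 2) ^ m := by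
      rw [mul_pow, ← pow_mul]; ring
    rw [expand]
    rw [div_le_iff₀ hfac] at hE
    linarith
  calc r ^ m ≤ 1 + r ^ (2 * m) := key
    _ ≤ 1 * Real.exp (a * r ^ 2) + (m.factorial : ℝ) / a ^ m * Real.exp (a * r ^ 2) := by
        have := h2; linarith
    _ = (1 + (m.factorial : ℝ) / a ^ m) * Real.exp (a * r ^ 2) := by ring

lemma aux_poly_bound (P : Polynomial ℝ) :
    ∃ C > 0, ∀ t : ℝ, |P.eval t| ≤ C * Real.exp ((1/4) * t ^ 2) := by
  induction P using Polynomial.induction_on' with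
  | add p q hp hq =>
    obtain ⟨C1, hC1, h1⟩ := hp
    obtain ⟨C2, hC2, h2⟩ := hq
    refine ⟨C1 + C2, by positivity, fun t => ?_⟩
    simp only [Polynomial.eval_add]
    calc |p.eval t + q.eval t| ≤ |p.eval t| + |q.eval t| := abs_add_le _ _
      _ ≤ C1 * Real.exp ((1/4) * t ^ 2) + C2 * Real.exp ((1/4) * t ^ 2) :=
          add_le_add (h1 t) (h2 t)
      _ = (C1 + C2) * Real.exp ((1/4) * t ^ 2) := by ring
  | monomial n a =>
    obtain ⟨C, hC, h⟩ := aux_pow_le_exp n (a := 1/4) (by norm_num)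
    refine ⟨|a| * C + 1, by positivity, fun t => ?_⟩
    have h1 : (1:ℝ) ≤ Real.exp ((1/4) * t ^ 2) := Real.one_le_exp (by positivity)
    have ht := h |t| (abs_nonneg t)
    rw [sq_abs] at ht
    rw [Polynomial.eval_monomial]
    calc |a * t ^ n| = |a| * |t| ^ n := by rw [abs_mul, abs_pow]
      _ ≤ |a| * (C * Real.exp ((1/4) * t ^ 2)) :=
          mul_le_mul_of_nonneg_left ht (abs_nonneg a)
      _ ≤ (|a| * C + 1) * Real.exp ((1/4) * t ^ 2) := by
          nlinarith [Real.exp_pos ((1/4) * t ^ 2)]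

lemma gauss_hasDerivAt (t : ℝ) :
    HasDerivAt (fun s : ℝ => Real.exp (-s ^ 2)) (Real.exp (-t ^ 2) * (-(2 * t))) t := by
  have h : HasDerivAt (fun s : ℝ => -s ^ 2) (-(2 * t)) t := by
    simpa using (hasDerivAt_pow 2 t).fun_neg
  simpa using h.exp

lemma gauss_iter_deriv (n : ℕ) :
    ∃ P : Polynomial ℝ, deriv^[n] (fun s : ℝ => Real.exp (-s ^ 2)) =
      fun t => P.eval t * Real.exp (-t ^ 2) := by
  induction n with
  | zero => exact ⟨1, by funext t; simp⟩
  | succ n ih =>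
    obtain ⟨P, hP⟩ := ih
    refine ⟨P.derivative - Polynomial.C 2 * Polynomial.X * P, ?_⟩
    rw [Function.iterate_succ_apply', hP]
    funext t
    have h1 : HasDerivAt (fun t : ℝ => P.eval t * Real.exp (-t ^ 2))
        (P.derivative.eval t * Real.exp (-t ^ 2) +
          P.eval t * (Real.exp (-t ^ 2) * (-(2 * t)))) t :=
      (P.hasDerivAt t).mul (gauss_hasDerivAt t)
    rw [h1.deriv]
    simp only [Polynomial.eval_sub, Polynomial.eval_mul, Polynomial.eval_C, Polynomial.eval_X]
    ring

lemma gauss_deriv_bound (n : ℕ) :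
    ∃ C > 0, ∀ t : ℝ, |deriv^[n] (fun s : ℝ => Real.exp (-s ^ 2)) t| ≤
      C * Real.exp (-(3/4) * t ^ 2) := by
  obtain ⟨P, hP⟩ := gauss_iter_deriv n
  obtain ⟨C, hC, h⟩ := aux_poly_bound P
  refine ⟨C, hC, fun t => ?_⟩
  rw [hP]
  rw [abs_mul, abs_of_pos (Real.exp_pos _)]
  calc |P.eval t| * Real.exp (-t ^ 2)
      ≤ C * Real.exp ((1/4) * t ^ 2) * Real.exp (-t ^ 2) :=
        mul_le_mul_of_nonneg_right (h t) (Real.exp_pos _).le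
    _ = C * Real.exp (-(3/4) * t ^ 2) := by
        rw [mul_assoc, ← Real.exp_add]; ring_nf

open scoped ContDiff

abbrev E4 := EuclideanSpace ℝ (Fin 4)

/-- Partial derivative in coordinate direction `i`. -/
noncomputable def pdR (i : Fin 4) (f : E4 → ℝ) : E4 → ℝ :=
  fun p => fderiv ℝ f p (EuclideanSpace.single i 1)

/-- Iterated partial derivative `∂^w` for a multi-index `w : ℕ⁴`. -/
noncomputable def pdMultiR (w : Fin 4 → ℕ) (f : E4 → ℝ) : E4 → ℝ :=
  (pdR 0)^[w 0] ((pdR 1)^[w 1] ((pdR 2)^[w 2] ((pdR 3)^[w 3] f)))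

lemma one_le_infty : (1 : WithTop ℕ∞) ≤ ∞ := by
  exact_mod_cast le_top

lemma iter_deriv_smul (c : ℝ) {g : ℝ → ℝ} (hg : ContDiff ℝ ∞ g) (n : ℕ) :
    deriv^[n] (fun t => c * g t) = fun t => c * deriv^[n] g t := by
  induction n with
  | zero => rfl
  | succ n ih =>
    rw [Function.iterate_succ_apply', ih, Function.iterate_succ_apply']
    funext t
    exact deriv_const_mul c (((hg.iterate_deriv n).differentiable (by simp)) t)

lemma pdR_prod (i : Fin 4) (f : Fin 4 → ℝ → ℝ) (hf : ∀ j, ContDiff ℝ ∞ (f j)) :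
    pdR i (fun q : E4 => ∏ j, f j (q j)) =
      fun q => ∏ j, Function.update f i (deriv (f i)) j (q j) := by
  funext q
  have hproj : ∀ j : Fin 4, HasFDerivAt (fun q : E4 => q j)
      (EuclideanSpace.proj j : E4 →L[ℝ] ℝ) q := fun j => by
    exact (EuclideanSpace.proj j : E4 →L[ℝ] ℝ).hasFDerivAt
  have hder : ∀ j : Fin 4, HasFDerivAt (fun q : E4 => f j (q j))
      (deriv (f j) (q j) • (EuclideanSpace.proj j : E4 →L[ℝ] ℝ)) q := fun j =>
    HasDerivAt.comp_hasFDerivAt q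
      (((hf j).differentiable (by simp) (q j)).hasDerivAt)
      (hproj j)
  have H : HasFDerivAt (fun q : E4 => ∏ j, f j (q j))
      (∑ j, (∏ k ∈ Finset.univ.erase j, f k (q k)) •
        (deriv (f j) (q j) • (EuclideanSpace.proj j : E4 →L[ℝ] ℝ))) q := by
    exact HasFDerivAt.finset_prod (fun j _ => hder j)
  simp only [pdR]
  rw [H.fderiv]
  simp only [ContinuousLinearMap.coe_sum', Finset.sum_apply, ContinuousLinearMap.coe_smul',
    Pi.smul_apply, PiLp.proj_apply, EuclideanSpace.single_apply, smul_eq_mul,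
    mul_ite, mul_one, mul_zero]
  rw [Finset.sum_ite_eq' Finset.univ i
    (fun j => (∏ k ∈ Finset.univ.erase j, f k (q k)) * deriv (f j) (q j))]
  simp only [Finset.mem_univ, if_true]
  have hRHS : (∏ j, Function.update f i (deriv (f i)) j (q j))
      = deriv (f i) (q i) * ∏ k ∈ Finset.univ.erase i, f k (q k) := by
    rw [← Finset.mul_prod_erase Finset.univ
      (fun j => Function.update f i (deriv (f i)) j (q j)) (Finset.mem_univ i),
      Function.update_self]
    congr 1
    exact Finset.prod_congr rfl (fun k hk => by
      rw [Function.update_of_ne (Finset.ne_of_mem_erase hk)])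
  rw [hRHS]
  ring

lemma pdR_iterate (i : Fin 4) (n : ℕ) (f : Fin 4 → ℝ → ℝ) (hf : ∀ j, ContDiff ℝ ∞ (f j)) :
    (pdR i)^[n] (fun q : E4 => ∏ j, f j (q j)) =
      fun q => ∏ j, Function.update f i (deriv^[n] (f i)) j (q j) := by
  induction n generalizing f with
  | zero => simp [Function.update_eq_self]
  | succ n ih =>
    rw [Function.iterate_succ_apply, pdR_prod i f hf]
    have hf' : ∀ j, ContDiff ℝ ∞ (Function.update f i (deriv (f i)) j) := fun j => by
      rcases eq_or_ne j i with rfl | h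
      · rw [Function.update_self]
        exact (contDiff_infty_iff_deriv.mp (hf j)).2
      · rw [Function.update_of_ne h]; exact hf j
    rw [ih _ hf']
    funext q
    apply Finset.prod_congr rfl
    intro j _
    rcases eq_or_ne j i with rfl | h
    · simp only [Function.update_self, ← Function.iterate_succ_apply]
    · rw [Function.update_of_ne h, Function.update_of_ne h, Function.update_of_ne h]

lemma pdMulti_prod (w : Fin 4 → ℕ) (f : Fin 4 → ℝ → ℝ) (hf : ∀ j, ContDiff ℝ ∞ (f j)) :
    pdMultiR w (fun q : E4 => ∏ j, f j (q j)) =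
      fun q => ∏ j, deriv^[w j] (f j) (q j) := by
  have hupd : ∀ (g : Fin 4 → ℝ → ℝ), (∀ j, ContDiff ℝ ∞ (g j)) → ∀ (i : Fin 4) (n : ℕ),
      ∀ j, ContDiff ℝ ∞ (Function.update g i (deriv^[n] (g i)) j) := by
    intro g hg i n j
    rcases eq_or_ne j i with rfl | h
    · rw [Function.update_self]; exact (hg j).iterate_deriv n
    · rw [Function.update_of_ne h]; exact hg j
  unfold pdMultiR
  rw [pdR_iterate 3 (w 3) f hf]
  set f3 := Function.update f 3 (deriv^[w 3] (f 3)) with hf3def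
  have hf3 := hupd f hf 3 (w 3)
  rw [pdR_iterate 2 (w 2) f3 hf3]
  set f2 := Function.update f3 2 (deriv^[w 2] (f3 2)) with hf2def
  have hf2 := hupd f3 hf3 2 (w 2)
  rw [pdR_iterate 1 (w 1) f2 hf2]
  set f1 := Function.update f2 1 (deriv^[w 1] (f2 1)) with hf1def
  have hf1 := hupd f2 hf2 1 (w 1)
  rw [pdR_iterate 0 (w 0) f1 hf1]
  funext q
  apply Finset.prod_congr rfl
  intro j _
  fin_cases j <;>
    simp [hf1def, hf2def, hf3def, Function.update_self, Function.update_of_ne,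
      show ((0:Fin 4) ≠ 1) by decide, show ((0:Fin 4) ≠ 2) by decide,
      show ((0:Fin 4) ≠ 3) by decide, show ((1:Fin 4) ≠ 2) by decide,
      show ((1:Fin 4) ≠ 3) by decide, show ((2:Fin 4) ≠ 3) by decide,
      Function.update]
theorem stmt12 (w : Fin 4 → ℕ) :
    ∃ c > 0, ∀ Λ Λ₀ : ℝ, 0 < Λ → Λ ≤ Λ₀ →
      (∀ p : E4, p ≠ 0 →
        HasDerivAt
          (fun L : ℝ => (Real.exp (-‖p‖ ^ 2 / Λ₀ ^ 2) - Real.exp (-‖p‖ ^ 2 / L ^ 2)) / ‖p‖ ^ 2)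
          (-(2 / Λ ^ 3) * Real.exp (-‖p‖ ^ 2 / Λ ^ 2)) Λ) ∧
      ContDiff ℝ (⊤ : ℕ∞) (fun p : E4 => -(2 / Λ ^ 3) * Real.exp (-‖p‖ ^ 2 / Λ ^ 2)) ∧
      ∀ p : E4,
        |pdMultiR w (fun q : E4 => -(2 / Λ ^ 3) * Real.exp (-‖q‖ ^ 2 / Λ ^ 2)) p| ≤
          c * max ‖p‖ Λ ^ (-3 - (∑ i, w i : ℤ)) * Real.exp (-‖p‖ ^ 2 / (2 * Λ ^ 2)) := by
  classical
  obtain ⟨C, hCpos, hC⟩ : ∃ C : Fin 4 → ℝ, (∀ j, 0 < C j) ∧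
      ∀ (j : Fin 4) (t : ℝ), |deriv^[w j] (fun s : ℝ => Real.exp (-s ^ 2)) t| ≤
        C j * Real.exp (-(3/4) * t ^ 2) := by
    choose C h1 h2 using fun j : Fin 4 => gauss_deriv_bound (w j)
    exact ⟨C, h1, h2⟩
  set m : ℕ := 3 + ∑ i, w i with hm
  obtain ⟨K, hKpos, hK⟩ := aux_pow_le_exp m (a := 1/4) (by norm_num)
  set Ctot : ℝ := ∏ j, C j with hCtot
  have hCtotpos : 0 < Ctot := Finset.prod_pos (fun j _ => hCpos j)
  refine ⟨2 * Ctot * (1 + K), by positivity, fun Λ Λ₀ hΛ hΛ₀ => ?_⟩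
  have hΛne : Λ ≠ 0 := hΛ.ne'
  have hnormq : ∀ q : E4, ‖q‖ ^ 2 = ∑ j, q j ^ 2 := fun q => by
    rw [EuclideanSpace.norm_eq, Real.sq_sqrt (by positivity)]
    exact Finset.sum_congr rfl (fun j _ => by rw [Real.norm_eq_abs, sq_abs])
  refine ⟨?_, ?_, ?_⟩
  · -- Part 1 : HasDerivAt
    intro p hp
    have hnp : ‖p‖ ≠ 0 := norm_ne_zero_iff.mpr hp
    have ha : (‖p‖:ℝ) ^ 2 ≠ 0 := pow_ne_zero 2 hnp
    have h1 : HasDerivAt (fun L : ℝ => L ^ 2) (2 * Λ) Λ := by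
      simpa using hasDerivAt_pow 2 Λ
    have h2 : HasDerivAt (fun L : ℝ => -‖p‖ ^ 2 * (L ^ 2)⁻¹)
        (-‖p‖ ^ 2 * (-(2 * Λ) / (Λ ^ 2) ^ 2)) Λ :=
      (h1.inv (pow_ne_zero 2 hΛne)).const_mul (-‖p‖ ^ 2)
    have h3 := h2.exp
    have h4 := ((hasDerivAt_const Λ (Real.exp (-‖p‖ ^ 2 / Λ₀ ^ 2))).sub h3).div_const (‖p‖ ^ 2)
    have hfn : (fun L : ℝ => (Real.exp (-‖p‖ ^ 2 / Λ₀ ^ 2) - Real.exp (-‖p‖ ^ 2 / L ^ 2)) / ‖p‖ ^ 2)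
        = fun L : ℝ =>
          (Real.exp (-‖p‖ ^ 2 / Λ₀ ^ 2) - Real.exp (-‖p‖ ^ 2 * (L ^ 2)⁻¹)) / ‖p‖ ^ 2 := by
      funext L
      rw [div_eq_mul_inv (-‖p‖ ^ 2) (L ^ 2)]
    rw [hfn]
    refine h4.congr_deriv ?_
    symm
    rw [show -‖p‖ ^ 2 * (Λ ^ 2)⁻¹ = -‖p‖ ^ 2 / Λ ^ 2 from (div_eq_mul_inv _ _).symm]
    rw [eq_div_iff ha]
    field_simp
    ring
  · -- Part 2 : smoothness
    exact contDiff_const.mul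
      (Real.contDiff_exp.comp (((contDiff_norm_sq ℝ).neg).div_const _))
  · -- Part 3 : the bound
    intro p
    set F : Fin 4 → ℝ → ℝ :=
      fun j t => (if j = 0 then -(2 / Λ ^ 3) else 1) * Real.exp (-(Λ⁻¹ * t) ^ 2) with hFdef
    have hinner : ContDiff ℝ ∞ (fun t : ℝ => Real.exp (-(Λ⁻¹ * t) ^ 2)) :=
      Real.contDiff_exp.comp (((contDiff_const.mul contDiff_id).pow 2).neg)
    have hFsmooth : ∀ j, ContDiff ℝ ∞ (F j) := fun j =>
      contDiff_const.mul (Real.contDiff_exp.comp (((contDiff_const.mul contDiff_id).pow 2).neg))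
    have hexpprod : ∀ q : E4,
        Real.exp (-‖q‖ ^ 2 / Λ ^ 2) = ∏ j, Real.exp (-(Λ⁻¹ * q j) ^ 2) := fun q => by
      rw [← Real.exp_sum]
      congr 1
      rw [hnormq q, Fin.sum_univ_four, Fin.sum_univ_four]
      field_simp
      ring
    have hite : (∏ j : Fin 4, (if j = (0:Fin 4) then -(2 / Λ ^ 3) else (1:ℝ))) = -(2 / Λ ^ 3) := by
      rw [Fin.prod_univ_four]
      norm_num [show (1:Fin 4) ≠ 0 by decide, show (2:Fin 4) ≠ 0 by decide,
        show (3:Fin 4) ≠ 0 by decide]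
    have hfun : (fun q : E4 => -(2 / Λ ^ 3) * Real.exp (-‖q‖ ^ 2 / Λ ^ 2))
        = fun q : E4 => ∏ j, F j (q j) := by
      funext q
      simp only [hFdef]
      rw [Finset.prod_mul_distrib, hite, hexpprod q]
    rw [hfun, pdMulti_prod w F hFsmooth]
    beta_reduce
    have hGn : ∀ n : ℕ, ContDiff ℝ n (fun s : ℝ => Real.exp (-s ^ 2)) := fun n =>
      Real.contDiff_exp.comp ((contDiff_id.pow 2).neg)
    have hscale : ∀ n : ℕ, deriv^[n] (fun t : ℝ => Real.exp (-(Λ⁻¹ * t) ^ 2))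
        = fun t => Λ⁻¹ ^ n * deriv^[n] (fun s : ℝ => Real.exp (-s ^ 2)) (Λ⁻¹ * t) := fun n => by
      have h := iteratedDeriv_comp_const_mul (hGn n) Λ⁻¹
      simpa [iteratedDeriv_eq_iterate] using h
    have hderF : ∀ j : Fin 4, deriv^[w j] (F j)
        = fun t => (if j = 0 then -(2 / Λ ^ 3) else 1) *
            (Λ⁻¹ ^ (w j) * deriv^[w j] (fun s : ℝ => Real.exp (-s ^ 2)) (Λ⁻¹ * t)) := by
      intro j
      have h0 : F j = fun t => (if j = 0 then -(2 / Λ ^ 3) else 1) *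
          Real.exp (-(Λ⁻¹ * t) ^ 2) := rfl
      rw [h0, iter_deriv_smul _ hinner (w j), hscale (w j)]
    have hprodeq : (∏ j, deriv^[w j] (F j) (p j))
        = ∏ j, (if j = 0 then -(2 / Λ ^ 3) else 1) *
            (Λ⁻¹ ^ (w j) * deriv^[w j] (fun s : ℝ => Real.exp (-s ^ 2)) (Λ⁻¹ * p j)) :=
      Finset.prod_congr rfl (fun j _ => by rw [hderF j])
    rw [hprodeq, Finset.abs_prod]
    have hstep : (∏ j, |(if j = 0 then -(2 / Λ ^ 3) else 1) *
            (Λ⁻¹ ^ (w j) * deriv^[w j] (fun s : ℝ => Real.exp (-s ^ 2)) (Λ⁻¹ * p j))|)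
        ≤ ∏ j, (if j = 0 then 2 / Λ ^ 3 else 1) *
            (Λ⁻¹ ^ (w j) * (C j * Real.exp (-(3/4) * (Λ⁻¹ * p j) ^ 2))) := by
      apply Finset.prod_le_prod (fun j _ => abs_nonneg _)
      intro j _
      rw [abs_mul, abs_mul]
      have h1 : |if j = 0 then -(2 / Λ ^ 3) else (1:ℝ)| = if j = 0 then 2 / Λ ^ 3 else 1 := by
        split_ifs
        · rw [abs_neg, abs_of_pos (by positivity)]
        · exact abs_one
      have h2 : |(Λ⁻¹ : ℝ) ^ (w j)| = Λ⁻¹ ^ (w j) := by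
        rw [abs_pow, abs_of_pos (inv_pos.mpr hΛ)]
      rw [h1, h2]
      refine mul_le_mul_of_nonneg_left (mul_le_mul_of_nonneg_left (hC j _) ?_) ?_
      · positivity
      · split_ifs <;> positivity
    refine le_trans hstep ?_
    have hitepos : (∏ j : Fin 4, (if j = (0:Fin 4) then 2 / Λ ^ 3 else (1:ℝ))) = 2 / Λ ^ 3 := by
      rw [Fin.prod_univ_four]
      norm_num [show (1:Fin 4) ≠ 0 by decide, show (2:Fin 4) ≠ 0 by decide,
        show (3:Fin 4) ≠ 0 by decide]
    rw [Finset.prod_mul_distrib, Finset.prod_mul_distrib, Finset.prod_mul_distrib, hitepos,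
      Finset.prod_pow_eq_pow_sum, ← hCtot]
    have hexp2 : (∏ j, Real.exp (-(3/4) * (Λ⁻¹ * p j) ^ 2))
        = Real.exp (-‖p‖ ^ 2 / (4 * Λ ^ 2)) * Real.exp (-‖p‖ ^ 2 / (2 * Λ ^ 2)) := by
      rw [← Real.exp_sum, ← Real.exp_add]
      congr 1
      rw [hnormq p, Fin.sum_univ_four, Fin.sum_univ_four]
      field_simp
      ring
    rw [hexp2]
    -- final comparison
    have hMpos : 0 < max ‖p‖ Λ := lt_of_lt_of_le hΛ (le_max_right _ _)
    have hzpow : (max ‖p‖ Λ) ^ (-3 - (∑ i, w i : ℤ)) = ((max ‖p‖ Λ) ^ m)⁻¹ := by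
      rw [show (-3 - (∑ i, w i : ℤ)) = -(m : ℤ) by rw [hm]; push_cast; ring,
        zpow_neg, zpow_natCast]
    rw [hzpow]
    have key : Real.exp (-‖p‖ ^ 2 / (4 * Λ ^ 2)) * (max ‖p‖ Λ) ^ m ≤ (1 + K) * Λ ^ m := by
      rcases le_total ‖p‖ Λ with hmax | hmax
      · rw [max_eq_right hmax]
        have he : Real.exp (-‖p‖ ^ 2 / (4 * Λ ^ 2)) ≤ 1 := by
          rw [Real.exp_le_one_iff, neg_div, neg_nonpos]
          positivity
        nlinarith [pow_pos hΛ m]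
      · rw [max_eq_left hmax]
        have hr := hK (‖p‖ / Λ) (by positivity)
        have hexpeq : Real.exp ((1/4) * (‖p‖ / Λ) ^ 2) = Real.exp (‖p‖ ^ 2 / (4 * Λ ^ 2)) := by
          congr 1
          rw [div_pow]
          ring
        have h2 : ‖p‖ ^ m ≤ K * Real.exp (‖p‖ ^ 2 / (4 * Λ ^ 2)) * Λ ^ m := by
          rw [div_pow, hexpeq, div_le_iff₀ (pow_pos hΛ m)] at hr
          linarith
        have hinv : Real.exp (-‖p‖ ^ 2 / (4 * Λ ^ 2)) * Real.exp (‖p‖ ^ 2 / (4 * Λ ^ 2)) = 1 := by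
          rw [← Real.exp_add, neg_div, neg_add_cancel, Real.exp_zero]
        calc Real.exp (-‖p‖ ^ 2 / (4 * Λ ^ 2)) * ‖p‖ ^ m
            ≤ Real.exp (-‖p‖ ^ 2 / (4 * Λ ^ 2)) * (K * Real.exp (‖p‖ ^ 2 / (4 * Λ ^ 2)) * Λ ^ m) :=
              mul_le_mul_of_nonneg_left h2 (Real.exp_pos _).le
          _ = K * Λ ^ m * (Real.exp (-‖p‖ ^ 2 / (4 * Λ ^ 2)) *
                Real.exp (‖p‖ ^ 2 / (4 * Λ ^ 2))) := by ring
          _ = K * Λ ^ m := by rw [hinv, mul_one]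
          _ ≤ (1 + K) * Λ ^ m := by nlinarith [pow_pos hΛ m]
    have h3 : (Λ ^ m)⁻¹ * Real.exp (-‖p‖ ^ 2 / (4 * Λ ^ 2))
        ≤ (1 + K) * ((max ‖p‖ Λ) ^ m)⁻¹ := by
      rw [inv_mul_le_iff₀ (pow_pos hΛ m)]
      calc Real.exp (-‖p‖ ^ 2 / (4 * Λ ^ 2))
          = (Real.exp (-‖p‖ ^ 2 / (4 * Λ ^ 2)) * (max ‖p‖ Λ) ^ m) * ((max ‖p‖ Λ) ^ m)⁻¹ := by
            field_simp
        _ ≤ ((1 + K) * Λ ^ m) * ((max ‖p‖ Λ) ^ m)⁻¹ :=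
            mul_le_mul_of_nonneg_right key (by positivity)
        _ = Λ ^ m * ((1 + K) * ((max ‖p‖ Λ) ^ m)⁻¹) := by ring
    have hLHS : 2 / Λ ^ 3 * (Λ⁻¹ ^ (∑ i, w i) * (Ctot *
          (Real.exp (-‖p‖ ^ 2 / (4 * Λ ^ 2)) * Real.exp (-‖p‖ ^ 2 / (2 * Λ ^ 2)))))
        = (2 * Ctot * Real.exp (-‖p‖ ^ 2 / (2 * Λ ^ 2))) *
            ((Λ ^ m)⁻¹ * Real.exp (-‖p‖ ^ 2 / (4 * Λ ^ 2))) := by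
      rw [hm, pow_add, inv_pow]
      field_simp
    calc 2 / Λ ^ 3 * (Λ⁻¹ ^ (∑ i, w i) * (Ctot *
          (Real.exp (-‖p‖ ^ 2 / (4 * Λ ^ 2)) * Real.exp (-‖p‖ ^ 2 / (2 * Λ ^ 2)))))
        = (2 * Ctot * Real.exp (-‖p‖ ^ 2 / (2 * Λ ^ 2))) *
            ((Λ ^ m)⁻¹ * Real.exp (-‖p‖ ^ 2 / (4 * Λ ^ 2))) := hLHS
      _ ≤ (2 * Ctot * Real.exp (-‖p‖ ^ 2 / (2 * Λ ^ 2))) *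
            ((1 + K) * ((max ‖p‖ Λ) ^ m)⁻¹) :=
          mul_le_mul_of_nonneg_left h3 (by positivity)
      _ = 2 * Ctot * (1 + K) * ((max ‖p‖ Λ) ^ m)⁻¹ *
            Real.exp (-‖p‖ ^ 2 / (2 * Λ ^ 2)) := by ring
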